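/- The ranked agenda rule RA satisfies overlapping agenda separability: for every constrained agenda (A,Γ), every independent overlapping decomposition {A1,A2} of A, and every profile P over A, if for all J1 ∈ RA(P↓A1) and J2 ∈ RA(P↓A2) we have J1 ∩ A2 = J2 ∩ A1, then RA(P) = { J1 ∪ J2 : J1 ∈ RA(P↓A1), J2 ∈ RA(P↓A2) }. -/

import Mathlib

/-!
Judgment aggregation framework.
Valuations form a nonempty finite type `V`; a formula is identified with its set of
models, i.e. a `Finset V`; negation is complement.
-/

namespace JA

variable {V : Type*} [Fintype V] [DecidableEq V]

/-- A set of formulas `J` is `Γ`-consistent if some model of `Γ` satisfies every formula of `J`. -/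
def Consistent (Γ : Finset V) (J : Finset (Finset V)) : Prop :=
  ∃ v ∈ Γ, ∀ φ ∈ J, v ∈ φ

/-- `A` is an agenda: it is closed under negation (complement) and contains no formula
with an empty or full set of models. -/
def IsAgenda (A : Finset (Finset V)) : Prop :=
  (∀ φ ∈ A, φᶜ ∈ A) ∧ ∀ φ ∈ A, φ.Nonempty ∧ φ ≠ Finset.univ

/-- The set `𝒥_A` of complete `Γ`-consistent judgment sets over the agenda `A`. -/
def CCJ (Γ : Finset V) (A : Finset (Finset V)) : Set (Finset (Finset V)) :=
  {J | J ⊆ A ∧ (∀ φ ∈ A, φ ∈ J ∨ φᶜ ∈ J) ∧ Consistent Γ J}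

/-- A profile is an `n`-tuple of complete `Γ`-consistent judgment sets. -/
def IsProfile (Γ : Finset V) (A : Finset (Finset V)) {n : ℕ}
    (P : Fin n → Finset (Finset V)) : Prop :=
  ∀ i, P i ∈ CCJ Γ A

/-- Restriction `P↓B` of a profile `P` to a sub-agenda `B`. -/
def restrict {n : ℕ} (P : Fin n → Finset (Finset V)) (B : Finset (Finset V)) :
    Fin n → Finset (Finset V) :=
  fun i => P i ∩ B

/-- `{A1, A2}` is an independent partition of `A`. -/
def IndepPartition (Γ : Finset V) (A A1 A2 : Finset (Finset V)) : Prop :=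
  A1 ∪ A2 = A ∧ Disjoint A1 A2 ∧ IsAgenda A1 ∧ IsAgenda A2 ∧
    ∀ J1 ∈ CCJ Γ A1, ∀ J2 ∈ CCJ Γ A2, Consistent Γ (J1 ∪ J2)

/-- `{A1, A2}` is an independent overlapping decomposition (IOD) of `A`. -/
def IOD (Γ : Finset V) (A A1 A2 : Finset (Finset V)) : Prop :=
  A1 ∪ A2 = A ∧ IsAgenda A1 ∧ IsAgenda A2 ∧
    ∀ J1 ∈ CCJ Γ A1, ∀ J2 ∈ CCJ Γ A2, J1 ∩ A2 = J2 ∩ A1 → J1 ∪ J2 ∈ CCJ Γ A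

/-- The set `{ J1 ∪ J2 : J1 ∈ S1, J2 ∈ S2 }`. -/
def pairUnions (S1 S2 : Set (Finset (Finset V))) : Set (Finset (Finset V)) :=
  {J | ∃ J1 ∈ S1, ∃ J2 ∈ S2, J = J1 ∪ J2}

/-- `N(P,φ)`: the number of agents of the profile `P` accepting `φ`. -/
def Ncount {n : ℕ} (P : Fin n → Finset (Finset V)) (φ : Finset V) : ℕ :=
  (Finset.univ.filter fun i => φ ∈ P i).card

/-- The majoritarian set `m(P) = {φ ∈ A : N(P,φ) > n/2}`. -/
def maj {n : ℕ} (A : Finset (Finset V)) (P : Fin n → Finset (Finset V)) :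
    Finset (Finset V) :=
  A.filter fun φ => n < 2 * Ncount P φ

end JA

namespace JA

variable {V : Type*} [Fintype V] [DecidableEq V]

open Classical in
/-- The greedy procedure of the ranked agenda rule: go through the list of agenda
formulas in order, adding a formula whenever it keeps the set `Γ`-consistent. -/
noncomputable def greedy (Γ : Finset V) :
    List (Finset V) → Finset (Finset V) → Finset (Finset V)
  | [], S => S
  | φ :: l, S =>
      if Consistent Γ (insert φ S) then greedy Γ l (insert φ S) else greedy Γ l S

/-- The ranked agenda rule `RA`: outputs all judgment sets obtained by running the greedy
procedure along some enumeration of `A` ordered by weakly decreasing majority support. -/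
noncomputable def RA (Γ : Finset V) (A : Finset (Finset V)) {n : ℕ}
    (P : Fin n → Finset (Finset V)) : Set (Finset (Finset V)) :=
  {J | ∃ l : List (Finset V), l.Nodup ∧ l.toFinset = A ∧
    l.Pairwise (fun φ ψ => Ncount P ψ ≤ Ncount P φ) ∧ J = greedy Γ l ∅}

end JA

/-!
Along a ranking `l` of `A`, the greedy run is the union `K` of its runs along the induced
rankings of `A₁` and `A₂`. By independence and compatibility `K` is consistent; at the first
formula of `l` where the run and `K` disagree, the run must accept a formula outside `K`, but
the run on `A₁` or `A₂` rejected it against a subset of what the run along `l` had accepted.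

Conversely, rankings `m₁` of `A₁` and `m₂` of `A₂` interleave into a ranking `l` of `A`
inducing `m₁` on `A₁`. On `A₂` it induces a ranking `t` that may reorder only formulas of `A₁`,
whose verdicts compatibility fixes. So the first disagreement between the runs along `t` and
`m₂` lies outside `A₁`, where both see the formulas in the same order; then each run would
have to accept it while the other rejects it.
-/

namespace List

theorem filter_eq_of_sublist_of_perm {α : Type*} {p : α → Bool} {c d L : List α}
    (hcL : c <+ L) (hL : L ~ c ++ d) (hc : ∀ x ∈ c, p x) (hd : ∀ x ∈ d, p x = false) :
    L.filter p = c := by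
  have hsub : c <+ L.filter p := filter_eq_self.2 hc ▸ hcL.filter p
  refine (hsub.eq_of_length ?_).symm
  rw [(hL.filter p).length_eq, filter_append, filter_eq_self.2 hc,
    filter_eq_nil_iff.2 (by simpa using hd), append_nil]

theorem exists_perm_pairwise_filter_eq {α β : Type*} [LinearOrder β] (f : α → β)
    (p : α → Bool) {c d : List α} (hc : c.Pairwise (fun a b => f b ≤ f a))
    (hd : d.Pairwise (fun a b => f b ≤ f a)) (hcp : ∀ x ∈ c, p x) (hdp : ∀ x ∈ d, p x = false) :
    ∃ L : List α, L ~ c ++ d ∧ L.Pairwise (fun a b => f b ≤ f a) ∧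
      L.filter p = c ∧ L.filter (fun x => !p x) = d := by
  let le : α → α → Bool := fun a b => decide (f b ≤ f a)
  have trans : ∀ a b c, le a b → le b c → le a c := by
    simp only [le, decide_eq_true_eq]
    exact fun a b c hab hbc => hbc.trans hab
  have total : ∀ a b, (le a b || le b a) := by simp [le, le_total]
  have hperm := mergeSort_perm (c ++ d) le
  have hsub : ∀ {e : List α}, e.Pairwise (fun a b => f b ≤ f a) → e <+ c ++ d →
      e <+ (c ++ d).mergeSort le := fun he hsub =>
    sublist_mergeSort trans total (he.imp (by simp [le])) hsub
  exact ⟨_, hperm, (pairwise_mergeSort trans total _).imp (by simp [le]),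
    filter_eq_of_sublist_of_perm (hsub hc (sublist_append_left _ _)) hperm hcp hdp,
    filter_eq_of_sublist_of_perm (hsub hd (sublist_append_right _ _))
      (hperm.trans perm_append_comm) (by simpa) (by simpa)⟩

end List

namespace JA

open scoped symmDiff

variable {V : Type*}

theorem Consistent.mono {Γ : Finset V} {S T : Finset (Finset V)} (hST : S ⊆ T)
    (hT : Consistent Γ T) : Consistent Γ S :=
  let ⟨v, hv, hvT⟩ := hT
  ⟨v, hv, fun φ hφ => hvT φ (hST hφ)⟩

theorem consistent_empty {Γ : Finset V} (hΓ : Γ.Nonempty) : Consistent Γ ∅ :=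
  let ⟨v, hv⟩ := hΓ
  ⟨v, hv, by simp⟩

section Greedy

variable [DecidableEq V] {Γ : Finset V}

theorem greedy_append (p s : List (Finset V)) (S : Finset (Finset V)) :
    greedy Γ (p ++ s) S = greedy Γ s (greedy Γ p S) := by
  induction p generalizing S with
  | nil => rfl
  | cons φ p ih =>
    simp only [List.cons_append, greedy]
    split <;> exact ih _

theorem subset_greedy (l : List (Finset V)) (S : Finset (Finset V)) : S ⊆ greedy Γ l S := by
  induction l generalizing S with
  | nil => exact subset_rfl
  | cons φ l ih =>
    rw [greedy]
    split
    · exact (Finset.subset_insert _ _).trans (ih _)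
    · exact ih _

theorem greedy_subset_union (l : List (Finset V)) (S : Finset (Finset V)) :
    greedy Γ l S ⊆ S ∪ l.toFinset := by
  induction l generalizing S with
  | nil => simp [greedy]
  | cons φ l ih =>
    rw [greedy]
    split <;> refine (ih _).trans fun x hx => ?_ <;> simp at hx ⊢ <;> tauto

theorem greedy_empty_subset (l : List (Finset V)) : greedy Γ l ∅ ⊆ l.toFinset := by
  simpa using greedy_subset_union (Γ := Γ) l ∅

theorem greedy_subset_greedy_append (p s : List (Finset V)) (S : Finset (Finset V)) :
    greedy Γ p S ⊆ greedy Γ (p ++ s) S := by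
  rw [greedy_append]
  exact subset_greedy _ _

theorem consistent_greedy (l : List (Finset V)) {S : Finset (Finset V)}
    (hS : Consistent Γ S) : Consistent Γ (greedy Γ l S) := by
  induction l generalizing S with
  | nil => exact hS
  | cons φ l ih =>
    rw [greedy]
    split
    · exact ih ‹_›
    · exact ih hS

theorem mem_greedy_of_consistent_insert {p s : List (Finset V)} {S : Finset (Finset V)}
    {φ : Finset V} (h : Consistent Γ (insert φ (greedy Γ p S))) :
    φ ∈ greedy Γ (p ++ φ :: s) S := by
  rw [greedy_append, greedy, if_pos h]
  exact subset_greedy _ _ (Finset.mem_insert_self _ _)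

theorem greedy_mem_CCJ [Fintype V] (hΓ : Γ.Nonempty) {B : Finset (Finset V)}
    (hB : ∀ φ ∈ B, φᶜ ∈ B) {l : List (Finset V)} (hl : l.toFinset = B) :
    greedy Γ l ∅ ∈ CCJ Γ B := by
  have hcons := consistent_greedy l (consistent_empty hΓ)
  refine ⟨hl ▸ greedy_empty_subset l, fun φ hφ => ?_, hcons⟩
  have hmissed : ∀ ψ ∈ B, ψ ∉ greedy Γ l ∅ → ¬ Consistent Γ (insert ψ (greedy Γ l ∅)) := by
    intro ψ hψ hψG hc
    obtain ⟨p, s, rfl⟩ := List.append_of_mem (List.mem_toFinset.1 (hl ▸ hψ))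
    exact hψG (mem_greedy_of_consistent_insert
      (hc.mono (Finset.insert_subset_insert _ (greedy_subset_greedy_append _ _ _))))
  by_contra! h
  obtain ⟨v, hv, hvG⟩ := hcons
  by_cases hvφ : v ∈ φ
  · exact hmissed φ hφ h.1 ⟨v, hv, Finset.forall_mem_insert _ _ _ |>.2 ⟨hvφ, hvG⟩⟩
  · exact hmissed φᶜ (hB φ hφ) h.2
      ⟨v, hv, Finset.forall_mem_insert _ _ _ |>.2 ⟨Finset.mem_compl.2 hvφ, hvG⟩⟩

theorem mem_greedy_of_find?_symmDiff {K : Finset (Finset V)} (hK : Consistent Γ K)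
    {l : List (Finset V)} {φ : Finset V} (h : l.find? (· ∈ greedy Γ l ∅ ∆ K) = some φ) :
    φ ∈ greedy Γ l ∅ ∧ φ ∉ K := by
  obtain ⟨hφ, p, s, rfl, hp⟩ := List.find?_eq_some_iff_append.1 h
  simp only [decide_eq_true_eq, Finset.mem_symmDiff] at hφ
  refine hφ.resolve_right fun ⟨hφK, hφG⟩ => hφG (mem_greedy_of_consistent_insert (hK.mono ?_))
  refine Finset.insert_subset hφK fun x hx => ?_
  have hxG := greedy_subset_greedy_append p (φ :: s) ∅ hx
  simpa [Finset.mem_symmDiff, hxG] using hp x (List.mem_toFinset.1 (greedy_empty_subset p hx))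

theorem not_mem_greedy_of_not_mem_greedy_filter {l p s : List (Finset V)} {φ : Finset V}
    {B : Finset (Finset V)} (hl : l = p ++ φ :: s) (hG : Consistent Γ (greedy Γ l ∅))
    (hφB : φ ∈ B) (hp : ∀ x ∈ p, x ∈ greedy Γ (l.filter (· ∈ B)) ∅ → x ∈ greedy Γ l ∅)
    (hφ : φ ∉ greedy Γ (l.filter (· ∈ B)) ∅) : φ ∉ greedy Γ l ∅ := by
  intro hφG
  have hfilter : l.filter (· ∈ B) = p.filter (· ∈ B) ++ φ :: s.filter (· ∈ B) := by
    rw [hl, List.filter_append, List.filter_cons_of_pos (by simpa using hφB)]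
  rw [hfilter] at hp hφ
  refine hφ (mem_greedy_of_consistent_insert (hG.mono (Finset.insert_subset hφG fun x hx => ?_)))
  have hxp := List.mem_toFinset.1 (greedy_empty_subset _ hx)
  exact hp x (List.mem_of_mem_filter hxp) (greedy_subset_greedy_append _ _ _ hx)

theorem greedy_eq_union_greedy_filter {l : List (Finset V)} {B₁ B₂ : Finset (Finset V)}
    (hl : ∀ x ∈ l, x ∈ B₁ ∨ x ∈ B₂)
    (hK : Consistent Γ (greedy Γ (l.filter (· ∈ B₁)) ∅ ∪ greedy Γ (l.filter (· ∈ B₂)) ∅)) :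
    greedy Γ l ∅ = greedy Γ (l.filter (· ∈ B₁)) ∅ ∪ greedy Γ (l.filter (· ∈ B₂)) ∅ := by
  set K := greedy Γ (l.filter (· ∈ B₁)) ∅ ∪ greedy Γ (l.filter (· ∈ B₂)) ∅
  have hG : Consistent Γ (greedy Γ l ∅) := consistent_greedy l (hK.mono (Finset.empty_subset _))
  by_contra hne
  have hsub : greedy Γ l ∅ ∆ K ⊆ l.toFinset := by
    refine symmDiff_le_sup.trans (Finset.union_subset (greedy_empty_subset l)
      (Finset.union_subset ?_ ?_)) <;>
    exact (greedy_empty_subset _).trans fun y hy =>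
      List.mem_toFinset.2 (List.mem_of_mem_filter (List.mem_toFinset.1 hy))
  obtain ⟨x, hx⟩ := Finset.symmDiff_nonempty.2 hne
  obtain ⟨φ, hfind⟩ : ∃ φ, l.find? (· ∈ greedy Γ l ∅ ∆ K) = some φ :=
    Option.isSome_iff_exists.1 (List.find?_isSome.2 ⟨x, List.mem_toFinset.1 (hsub hx), by simpa⟩)
  obtain ⟨hφG, hφK⟩ := mem_greedy_of_find?_symmDiff hK hfind
  obtain ⟨-, p, s, hps, hp⟩ := List.find?_eq_some_iff_append.1 hfind
  have hagree : ∀ x ∈ p, x ∈ K → x ∈ greedy Γ l ∅ := fun x hx hxK => by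
    simpa [Finset.mem_symmDiff, hxK] using hp x hx
  rcases hl φ (by simp [hps]) with hB | hB
  · exact not_mem_greedy_of_not_mem_greedy_filter hps hG hB
      (fun x hx h => hagree x hx (Finset.mem_union_left _ h))
      (fun h => hφK (Finset.mem_union_left _ h)) hφG
  · exact not_mem_greedy_of_not_mem_greedy_filter hps hG hB
      (fun x hx h => hagree x hx (Finset.mem_union_right _ h))
      (fun h => hφK (Finset.mem_union_right _ h)) hφG

theorem greedy_eq_of_filter_not_mem_eq (hΓ : Γ.Nonempty) {t m : List (Finset V)}
    {B : Finset (Finset V)} (hB : ∀ x ∈ B, x ∈ greedy Γ t ∅ ↔ x ∈ greedy Γ m ∅)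
    (hfilter : t.filter (· ∉ B) = m.filter (· ∉ B)) : greedy Γ t ∅ = greedy Γ m ∅ := by
  by_contra hne
  have hfind : ∀ l : List (Finset V), l.find? (· ∈ greedy Γ t ∅ ∆ greedy Γ m ∅) =
      (l.filter (· ∉ B)).find? (· ∈ greedy Γ t ∅ ∆ greedy Γ m ∅) := fun l => by
    rw [List.find?_filter]
    congr 1
    funext x
    by_cases hx : x ∈ B <;> simp [hx, Finset.mem_symmDiff, hB x]
  have hsame : t.find? (· ∈ greedy Γ t ∅ ∆ greedy Γ m ∅) =
      m.find? (· ∈ greedy Γ t ∅ ∆ greedy Γ m ∅) := by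
    rw [hfind t, hfind m, hfilter]
  obtain ⟨x, hx⟩ := Finset.symmDiff_nonempty.2 hne
  obtain ⟨φ, hφt⟩ : ∃ φ, t.find? (· ∈ greedy Γ t ∅ ∆ greedy Γ m ∅) = some φ := by
    refine Option.isSome_iff_exists.1 ?_
    rcases Finset.mem_symmDiff.1 hx with ⟨hxt, -⟩ | ⟨hxm, -⟩
    · exact List.find?_isSome.2
        ⟨x, List.mem_toFinset.1 (greedy_empty_subset t hxt), by simpa using hx⟩
    · exact hsame ▸ List.find?_isSome.2
        ⟨x, List.mem_toFinset.1 (greedy_empty_subset m hxm), by simpa using hx⟩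
  have hφm : m.find? (· ∈ greedy Γ m ∅ ∆ greedy Γ t ∅) = some φ := by
    rw [symmDiff_comm, ← hsame, hφt]
  exact (mem_greedy_of_find?_symmDiff (consistent_greedy t (consistent_empty hΓ)) hφm).2
    (mem_greedy_of_find?_symmDiff (consistent_greedy m (consistent_empty hΓ)) hφt).1

end Greedy

section Ranking

variable [DecidableEq V] {n : ℕ}

/-- The enumerations `σ` over which the ranked agenda rule ranges. -/
structure IsRanking (P : Fin n → Finset (Finset V)) (A : Finset (Finset V))
    (l : List (Finset V)) : Prop where
  nodup : l.Nodup
  toFinset_eq : l.toFinset = A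
  pairwise : l.Pairwise (fun φ ψ => Ncount P ψ ≤ Ncount P φ)

theorem IsRanking.mem_iff {P : Fin n → Finset (Finset V)} {A : Finset (Finset V)}
    {l : List (Finset V)} (hl : IsRanking P A l) {x : Finset V} : x ∈ l ↔ x ∈ A := by
  rw [← List.mem_toFinset, hl.toFinset_eq]

theorem mem_RA [Fintype V] {Γ : Finset V} {A J : Finset (Finset V)}
    {P : Fin n → Finset (Finset V)} :
    J ∈ RA Γ A P ↔ ∃ l, IsRanking P A l ∧ J = greedy Γ l ∅ :=
  ⟨fun ⟨l, h₁, h₂, h₃, hJ⟩ => ⟨l, ⟨h₁, h₂, h₃⟩, hJ⟩,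
    fun ⟨l, ⟨h₁, h₂, h₃⟩, hJ⟩ => ⟨l, h₁, h₂, h₃, hJ⟩⟩

theorem Ncount_restrict (P : Fin n → Finset (Finset V)) {B : Finset (Finset V)} {φ : Finset V}
    (hφ : φ ∈ B) : Ncount (restrict P B) φ = Ncount P φ := by
  simp [Ncount, restrict, hφ]

theorem isRanking_restrict_iff {P : Fin n → Finset (Finset V)} {B : Finset (Finset V)}
    {l : List (Finset V)} : IsRanking (restrict P B) B l ↔ IsRanking P B l := by
  refine ⟨fun h => ⟨h.nodup, h.toFinset_eq, h.pairwise.imp_of_mem fun ha hb hab => ?_⟩,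
    fun h => ⟨h.nodup, h.toFinset_eq, h.pairwise.imp_of_mem fun ha hb hab => ?_⟩⟩
  all_goals simpa only [Ncount_restrict P (h.mem_iff.1 ha), Ncount_restrict P (h.mem_iff.1 hb)]
    using hab

theorem mem_RA_restrict [Fintype V] {Γ : Finset V} {B J : Finset (Finset V)}
    {P : Fin n → Finset (Finset V)} :
    J ∈ RA Γ B (restrict P B) ↔ ∃ l, IsRanking P B l ∧ J = greedy Γ l ∅ := by
  simp only [mem_RA, isRanking_restrict_iff]

theorem IsRanking.filter {P : Fin n → Finset (Finset V)} {A B : Finset (Finset V)}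
    {l : List (Finset V)} (hl : IsRanking P A l) (hBA : B ⊆ A) :
    IsRanking P B (l.filter (· ∈ B)) where
  nodup := hl.nodup.filter _
  toFinset_eq := by
    ext x
    simp only [List.mem_toFinset, List.mem_filter, decide_eq_true_eq]
    exact ⟨And.right, fun hx => ⟨hl.mem_iff.2 (hBA hx), hx⟩⟩
  pairwise := hl.pairwise.sublist List.filter_sublist

theorem IsRanking.exists_interleave {P : Fin n → Finset (Finset V)} {A₁ A₂ : Finset (Finset V)}
    {m₁ m₂ : List (Finset V)} (h₁ : IsRanking P A₁ m₁) (h₂ : IsRanking P A₂ m₂) :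
    ∃ l, IsRanking P (A₁ ∪ A₂) l ∧ l.filter (· ∈ A₁) = m₁ ∧
      (l.filter (· ∈ A₂)).filter (· ∉ A₁) = m₂.filter (· ∉ A₁) := by
  obtain ⟨l, hperm, hsorted, hl₁, hl₂⟩ := List.exists_perm_pairwise_filter_eq (Ncount P)
    (· ∈ A₁) (d := m₂.filter (· ∉ A₁)) h₁.pairwise (h₂.pairwise.sublist List.filter_sublist)
    (fun x hx => by simpa using h₁.mem_iff.1 hx)
    (fun x hx => by simpa using (List.mem_filter.1 hx).2)
  have hmem : ∀ x ∈ l, x ∈ A₁ ∨ x ∈ A₂ := fun x hx => by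
    have := hperm.mem_iff.1 hx
    simp only [List.mem_append, List.mem_filter, h₁.mem_iff, h₂.mem_iff] at this
    tauto
  refine ⟨l, ⟨?_, ?_, hsorted⟩, hl₁, ?_⟩
  · refine hperm.nodup_iff.2 (List.nodup_append.2 ⟨h₁.nodup, h₂.nodup.filter _, ?_⟩)
    intro a ha b hb hab
    simp only [List.mem_filter, decide_eq_true_eq] at hb
    exact hb.2 (hab ▸ h₁.mem_iff.1 ha)
  · ext x
    simp only [List.mem_toFinset, hperm.mem_iff, List.mem_append, List.mem_filter, h₁.mem_iff,
      h₂.mem_iff, Finset.mem_union]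
    by_cases hx : x ∈ A₁ <;> simp [hx]
  · rw [List.filter_filter, ← hl₂]
    refine List.filter_congr fun x hx => ?_
    by_cases hx₁ : x ∈ A₁ <;> simp [hx₁, (hmem x hx).resolve_left]

end Ranking

section Separability

variable [Fintype V] [DecidableEq V] {n : ℕ} {Γ : Finset V} {A A₁ A₂ : Finset (Finset V)}
  {P : Fin n → Finset (Finset V)}

theorem greedy_eq_union_of_IOD (hΓ : Γ.Nonempty) (hIOD : IOD Γ A A₁ A₂)
    (hcomp : ∀ J₁ ∈ RA Γ A₁ (restrict P A₁), ∀ J₂ ∈ RA Γ A₂ (restrict P A₂), J₁ ∩ A₂ = J₂ ∩ A₁)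
    {l : List (Finset V)} (hl : IsRanking P A l) :
    greedy Γ l ∅ = greedy Γ (l.filter (· ∈ A₁)) ∅ ∪ greedy Γ (l.filter (· ∈ A₂)) ∅ := by
  obtain ⟨hA, hA₁, hA₂, hind⟩ := hIOD
  have hl₁ := hl.filter (hA ▸ Finset.subset_union_left : A₁ ⊆ A)
  have hl₂ := hl.filter (hA ▸ Finset.subset_union_right : A₂ ⊆ A)
  refine greedy_eq_union_greedy_filter (fun x hx => Finset.mem_union.1 (hA ▸ hl.mem_iff.1 hx)) ?_
  exact (hind _ (greedy_mem_CCJ hΓ hA₁.1 hl₁.toFinset_eq) _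
    (greedy_mem_CCJ hΓ hA₂.1 hl₂.toFinset_eq)
    (hcomp _ (mem_RA_restrict.2 ⟨_, hl₁, rfl⟩) _ (mem_RA_restrict.2 ⟨_, hl₂, rfl⟩))).2.2

theorem greedy_eq_of_filter_not_mem_eq_of_compat (hΓ : Γ.Nonempty)
    (hcomp : ∀ J₁ ∈ RA Γ A₁ (restrict P A₁), ∀ J₂ ∈ RA Γ A₂ (restrict P A₂), J₁ ∩ A₂ = J₂ ∩ A₁)
    {J₁ : Finset (Finset V)} (hJ₁ : J₁ ∈ RA Γ A₁ (restrict P A₁)) {t m : List (Finset V)}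
    (ht : IsRanking P A₂ t) (hm : IsRanking P A₂ m)
    (hfilter : t.filter (· ∉ A₁) = m.filter (· ∉ A₁)) : greedy Γ t ∅ = greedy Γ m ∅ := by
  have hA₁ : greedy Γ t ∅ ∩ A₁ = greedy Γ m ∅ ∩ A₁ :=
    (hcomp _ hJ₁ _ (mem_RA_restrict.2 ⟨t, ht, rfl⟩)).symm.trans
      (hcomp _ hJ₁ _ (mem_RA_restrict.2 ⟨m, hm, rfl⟩))
  refine greedy_eq_of_filter_not_mem_eq hΓ (fun x hx => ?_) hfilter
  simpa [hx] using Finset.ext_iff.1 hA₁ x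

end Separability

end JA

namespace JA

theorem ra_oas_general {V : Type*} [Fintype V] [DecidableEq V] :
    ∀ (Γ : Finset V) (A A1 A2 : Finset (Finset V)) (n : ℕ) (P : Fin n → Finset (Finset V)),
      Γ.Nonempty → IsAgenda A → IOD Γ A A1 A2 → IsProfile Γ A P →
      (∀ J1 ∈ RA Γ A1 (restrict P A1), ∀ J2 ∈ RA Γ A2 (restrict P A2),
        J1 ∩ A2 = J2 ∩ A1) →
      RA Γ A P = pairUnions (RA Γ A1 (restrict P A1)) (RA Γ A2 (restrict P A2)) := by
  intro Γ A A1 A2 n P hΓ _ hIOD _ hcomp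
  have hA1 : A1 ⊆ A := hIOD.1 ▸ Finset.subset_union_left
  have hA2 : A2 ⊆ A := hIOD.1 ▸ Finset.subset_union_right
  ext J
  constructor
  · intro hJ
    obtain ⟨l, hl, rfl⟩ := mem_RA.1 hJ
    exact ⟨_, mem_RA_restrict.2 ⟨_, hl.filter hA1, rfl⟩,
      _, mem_RA_restrict.2 ⟨_, hl.filter hA2, rfl⟩, greedy_eq_union_of_IOD hΓ hIOD hcomp hl⟩
  · rintro ⟨_, hJ1, _, hJ2, rfl⟩
    obtain ⟨m1, hm1, rfl⟩ := mem_RA_restrict.1 hJ1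
    obtain ⟨m2, hm2, rfl⟩ := mem_RA_restrict.1 hJ2
    obtain ⟨l, hl, hl1, hl2⟩ := hm1.exists_interleave hm2
    refine mem_RA.2 ⟨l, hIOD.1 ▸ hl, ?_⟩
    rw [greedy_eq_union_of_IOD (l := l) hΓ hIOD hcomp (hIOD.1 ▸ hl), hl1,
      greedy_eq_of_filter_not_mem_eq_of_compat hΓ hcomp hJ1 (hl.filter Finset.subset_union_right)
        hm2 hl2]

/-- The ranked agenda rule satisfies overlapping agenda separability. -/
theorem ra_oas {V : Type*} [Fintype V] [DecidableEq V] [Nonempty V] :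
    ∀ (Γ : Finset V) (A A1 A2 : Finset (Finset V)) (n : ℕ) (P : Fin n → Finset (Finset V)),
      Γ.Nonempty → IsAgenda A → IOD Γ A A1 A2 → IsProfile Γ A P →
      (∀ J1 ∈ RA Γ A1 (restrict P A1), ∀ J2 ∈ RA Γ A2 (restrict P A2),
        J1 ∩ A2 = J2 ∩ A1) →
      RA Γ A P = pairUnions (RA Γ A1 (restrict P A1)) (RA Γ A2 (restrict P A2)) :=
  ra_oas_general
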